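/- In the lower-bound graph G (λ disjoint complete binary trees of height k rooted at r_1,…,r_λ, source s with edges to each root, and complete bipartite edges from the set X of all leaves to a set Y), for every leaf x of tree B_i and every y ∈ Y the following holds: letting P be the unique root-to-x path in B_i and F the set of edges (u,v) of B_i with u on P and v the child of u not on P, the graph G∖F contains exactly one path from s to y passing through r_i, and this path uses the edge (x,y); moreover maxflow(s,y,G∖F) = λ. Consequently any subgraph of G missing the edge (x,y) fails to preserve the s-to-y max-flow under failure of F and is not a (λ,k)-FT-BFP. -/

import Mathlib

open Finset

/-- `p` is a nonempty directed path/walk (as a list of edges) from `s` to `t`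
using only edges of `G`. -/
def IsPath {V : Type*} (G : Finset (V × V)) (s t : V) (p : List (V × V)) : Prop :=
  p ≠ [] ∧ (∀ e ∈ p, e ∈ G) ∧ List.Chain' (fun e f => e.2 = f.1) p ∧
    p.head?.map Prod.fst = some s ∧ p.getLast?.map Prod.snd = some t

/-- `G` contains `r` pairwise edge-disjoint paths from `s` to `t` (unit capacities). -/
def EDP {V : Type*} (G : Finset (V × V)) (s t : V) (r : ℕ) : Prop :=
  ∃ ps : Fin r → List (V × V), (∀ i, IsPath G s t (ps i)) ∧
    ∀ i j, i ≠ j → ∀ e, e ∈ ps i → e ∉ ps j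

/-- Max-flow with unit capacities: the maximum number of edge-disjoint `s`-`t` paths. -/
noncomputable def maxFlow {V : Type*} (G : Finset (V × V)) (s t : V) : ℕ :=
  sSup {r | EDP G s t r}

/-- Directed reachability in the edge set `G`. -/
def Reach {V : Type*} (G : Finset (V × V)) (s t : V) : Prop :=
  Relation.ReflTransGen (fun a b => (a, b) ∈ G) s t

def inEdges {V : Type*} [DecidableEq V] (G : Finset (V × V)) (v : V) : Finset (V × V) :=
  G.filter fun e => e.2 = v

def outDeg {V : Type*} [DecidableEq V] (G : Finset (V × V)) (v : V) : ℕ :=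
  (G.filter fun e => e.1 = v).card

/-- `H` is a `(lam, k)` fault-tolerant bounded-flow-preserver of `G` w.r.t. source `s`:
for every set `F` of at most `k` failed edges and every vertex `t`, the `s`-`t` max-flow
of `H \ F` equals that of `G \ F` whenever the latter is at most `lam`, and is at least
`lam` otherwise. -/
def IsFTBFP {V : Type*} [DecidableEq V] (G H : Finset (V × V)) (s : V) (lam k : ℕ) : Prop :=
  H ⊆ G ∧ ∀ F : Finset (V × V), F.card ≤ k → ∀ t : V,
    (maxFlow (G \ F) s t ≤ lam → maxFlow (H \ F) s t = maxFlow (G \ F) s t) ∧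
    (lam < maxFlow (G \ F) s t → lam ≤ maxFlow (H \ F) s t)

/-- `H` is a `j`-fault-tolerant reachability subgraph of `G` w.r.t. source `s`. -/
def IsFTRS {V : Type*} [DecidableEq V] (G H : Finset (V × V)) (s : V) (j : ℕ) : Prop :=
  H ⊆ G ∧ ∀ F : Finset (V × V), F.card ≤ j → ∀ t : V,
    (Reach (H \ F) s t ↔ Reach (G \ F) s t)

def IsCut {V : Type*} (A : Finset V) (s t : V) : Prop := s ∈ A ∧ t ∉ A

/-- Number of edges of `G` from `A` to its complement. -/
def cutVal {V : Type*} [DecidableEq V] (G : Finset (V × V)) (A : Finset V) : ℕ :=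
  (G.filter fun e => e.1 ∈ A ∧ e.2 ∉ A).card

def IsMinCut {V : Type*} [DecidableEq V] (G : Finset (V × V)) (s t : V) (A : Finset V) : Prop :=
  IsCut A s t ∧ ∀ B : Finset V, IsCut B s t → cutVal G A ≤ cutVal G B

def IsCutS {V : Type*} (S : Finset V) (t : V) (A : Finset V) : Prop := S ⊆ A ∧ t ∉ A

def IsMinCutS {V : Type*} [DecidableEq V] (G : Finset (V × V)) (S : Finset V) (t : V)
    (A : Finset V) : Prop :=
  IsCutS S t A ∧ ∀ B : Finset V, IsCutS S t B → cutVal G A ≤ cutVal G B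

/-- Farthest min-cut: the min-cut whose source side contains the source side of
every min-cut. -/
def IsFMC {V : Type*} [DecidableEq V] (G : Finset (V × V)) (S : Finset V) (t : V)
    (A : Finset V) : Prop :=
  IsMinCutS G S t A ∧ ∀ B : Finset V, IsMinCutS G S t B → B ⊆ A

/-- Vertices outside `A` with an in-edge from `A`. -/
def outSet {V : Type*} [DecidableEq V] (G : Finset (V × V)) (A : Finset V) : Finset V :=
  (G.filter fun e => e.1 ∈ A ∧ e.2 ∉ A).image Prod.snd

open scoped Classical

/-- Nodes of a complete binary tree of height `k`, heap-indexed: the root is `0`,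
the children of `a` are `2a+1` and `2a+2`, the leaves are the indices `≥ 2^k - 1`. -/
abbrev TreeNode (k : ℕ) := Fin (2 ^ (k + 1) - 1)

/-- Vertices of the lower-bound graph: the source `s`, the nodes of `lam` disjoint
complete binary trees of height `k`, and a set `Y` of `nY` extra vertices. -/
abbrev LBV (lam k nY : ℕ) := Unit ⊕ (Fin lam × TreeNode k) ⊕ Fin nY

/-- Edges of the lower-bound graph: `s` to every root, the tree edges (directed
towards the leaves), and an edge from every leaf to every vertex of `Y`. -/
def lbEdge (lam k nY : ℕ) : LBV lam k nY × LBV lam k nY → Prop := fun e =>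
  match e with
  | (Sum.inl _, Sum.inr (Sum.inl (_, a))) => (a : ℕ) = 0
  | (Sum.inr (Sum.inl (i, a)), Sum.inr (Sum.inl (i', b))) =>
      i = i' ∧ ((b : ℕ) = 2 * (a : ℕ) + 1 ∨ (b : ℕ) = 2 * (a : ℕ) + 2)
  | (Sum.inr (Sum.inl (_, a)), Sum.inr (Sum.inr _)) => 2 ^ k - 1 ≤ (a : ℕ)
  | _ => False

noncomputable def lbGraph (lam k nY : ℕ) : Finset (LBV lam k nY × LBV lam k nY) :=
  Finset.univ.filter (lbEdge lam k nY)

/-! Removing `F` from `B_i` leaves every node of the root-to-`x` path other than `x` with a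
single out-edge, to the next node of the path, while the out-neighbours of `x` are the sinks
`Y`; so the only `s`-`y` path through `r_i` is `s r_i ⋯ x y`. The copies of this path in the
`λ` trees are edge-disjoint, and `λ` is also the out-degree of `s`. A subgraph `H` keeping this
max-flow must therefore use every edge out of `s`, in particular `(s, r_i)`, on one of its
paths, and that path contains `(x, y)`. -/

def heapParent (m : ℕ) : ℕ := (m - 1) / 2

def heapDepth (m : ℕ) : ℕ := Nat.log 2 (m + 1)

def IsHeapAncestor (a m : ℕ) : Prop := ∃ j, heapParent^[j] m = a

theorem iterate_heapParent_le (m j : ℕ) : heapParent^[j] m ≤ m := by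
  induction j with
  | zero => exact le_rfl
  | succ j ih =>
    rw [Function.iterate_succ_apply']
    exact (Nat.div_le_self _ _).trans (Nat.sub_le _ _) |>.trans ih

theorem heapParent_eq_iff {a b : ℕ} (hb : b ≠ 0) :
    heapParent b = a ↔ b = 2 * a + 1 ∨ b = 2 * a + 2 := by
  unfold heapParent
  omega

theorem heapDepth_heapParent (m : ℕ) : heapDepth (heapParent m) = heapDepth m - 1 := by
  unfold heapDepth heapParent
  rcases Nat.eq_zero_or_pos m with rfl | hm
  · simp
  · rw [← Nat.log_div_base]
    congr 1
    omega

theorem heapDepth_iterate_heapParent (m j : ℕ) :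
    heapDepth (heapParent^[j] m) = heapDepth m - j := by
  induction j with
  | zero => rfl
  | succ j ih => rw [Function.iterate_succ_apply', heapDepth_heapParent, ih, Nat.sub_sub]

theorem heapDepth_eq_zero_iff {m : ℕ} : heapDepth m = 0 ↔ m = 0 := by
  simp only [heapDepth, Nat.log_eq_zero_iff]
  omega

theorem le_heapDepth_iff {k m : ℕ} : k ≤ heapDepth m ↔ 2 ^ k - 1 ≤ m := by
  rw [heapDepth, Nat.le_log_iff_pow_le one_lt_two (Nat.succ_ne_zero m)]
  have := Nat.one_le_two_pow (n := k)
  omega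

theorem heapDepth_eq_of_le_of_lt {k m : ℕ} (h₁ : 2 ^ k - 1 ≤ m) (h₂ : m < 2 ^ (k + 1) - 1) :
    heapDepth m = k :=
  le_antisymm (Nat.le_of_lt_succ (lt_of_not_ge fun h => (le_heapDepth_iff.1 h).not_gt h₂))
    (le_heapDepth_iff.2 h₁)

section Ancestors

variable {k x : ℕ} (hx : heapDepth x = k)
include hx

theorem heapDepth_iterate_of_heapDepth_eq (j : ℕ) : heapDepth (heapParent^[j] x) = k - j := by
  rw [heapDepth_iterate_heapParent, hx]

theorem iterate_heapParent_eq_zero {j : ℕ} (hj : k ≤ j) : heapParent^[j] x = 0 :=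
  heapDepth_eq_zero_iff.1 (by rw [heapDepth_iterate_of_heapDepth_eq hx]; omega)

theorem iterate_heapParent_ne_zero {j : ℕ} (hj : j < k) : heapParent^[j] x ≠ 0 := fun h => by
  have := heapDepth_iterate_of_heapDepth_eq hx j
  rw [h, heapDepth_eq_zero_iff.2 rfl] at this
  omega

theorem iterate_heapParent_isChild {j : ℕ} (hj : j < k) :
    heapParent^[j] x = 2 * heapParent^[j + 1] x + 1 ∨
      heapParent^[j] x = 2 * heapParent^[j + 1] x + 2 := by
  rw [← heapParent_eq_iff (iterate_heapParent_ne_zero hx hj), Function.iterate_succ_apply']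

theorem iterate_heapParent_lt {j : ℕ} (hj : j < k) : heapParent^[j + 1] x < 2 ^ k - 1 := by
  by_contra h
  have := le_heapDepth_iff.2 (not_lt.1 h)
  rw [heapDepth_iterate_of_heapDepth_eq hx] at this
  omega

theorem IsHeapAncestor.exists_le {a : ℕ} (ha : IsHeapAncestor a x) :
    ∃ j ≤ k, heapParent^[j] x = a := by
  obtain ⟨j, rfl⟩ := ha
  rcases le_or_gt j k with hj | hj
  · exact ⟨j, hj, rfl⟩
  · exact ⟨k, le_rfl, by rw [iterate_heapParent_eq_zero hx le_rfl,
      iterate_heapParent_eq_zero hx hj.le]⟩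

/-- The root-to-`x` path meets each level once, so a child of one of its nodes lies on it
exactly when it is the next node. -/
theorem IsHeapAncestor.eq_iterate_of_heapParent_eq {b j : ℕ} (hb : IsHeapAncestor b x)
    (hb0 : b ≠ 0) (hbj : heapParent b = heapParent^[j + 1] x) (hj : j < k) :
    b = heapParent^[j] x := by
  obtain ⟨j', rfl⟩ := hb
  have hd := congrArg heapDepth hbj
  rw [heapDepth_heapParent, heapDepth_iterate_of_heapDepth_eq hx,
    heapDepth_iterate_of_heapDepth_eq hx] at hd
  have hpos : heapDepth (heapParent^[j'] x) ≠ 0 := mt heapDepth_eq_zero_iff.1 hb0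
  rw [heapDepth_iterate_of_heapDepth_eq hx] at hpos
  rw [show j' = j by omega]

end Ancestors

section Paths

variable {V : Type*} {G G' : Finset (V × V)} {s t : V} {e : V × V} {p : List (V × V)}

set_option linter.deprecated false in
theorem isPath_cons : IsPath G s t (e :: p) ↔
    e ∈ G ∧ e.1 = s ∧ (p = [] ∧ e.2 = t ∨ IsPath G e.2 t p) := by
  cases p with
  | nil => simp [IsPath, List.Chain']
  | cons f p =>
    simp only [IsPath, List.Chain', List.isChain_cons_cons, List.mem_cons, forall_eq_or_imp,
      List.head?_cons, Option.map_some, Option.some.injEq, List.getLast?_cons_cons]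
    grind

theorem IsPath.mono (hG : G ⊆ G') (hp : IsPath G s t p) : IsPath G' s t p :=
  ⟨hp.1, fun e he => hG (hp.2.1 e he), hp.2.2⟩

theorem IsPath.exists_mem_fst_eq (hp : IsPath G s t p) : ∃ e ∈ p, e ∈ G ∧ e.1 = s := by
  obtain _ | ⟨e, q⟩ := p
  · exact absurd rfl hp.1
  · obtain ⟨he, rfl, -⟩ := isPath_cons.1 hp
    exact ⟨e, List.mem_cons_self, he, rfl⟩

theorem IsPath.eq_cons_of_mem (hp : IsPath G s t p) (he : e ∈ p)
    (hsrc : ∀ f ∈ G, f.2 ≠ e.1) : ∃ q, p = e :: q := by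
  induction p generalizing s with
  | nil => simp at he
  | cons f q ih =>
    obtain rfl | he := List.mem_cons.1 he
    · exact ⟨q, rfl⟩
    obtain ⟨hf, -, ⟨rfl, -⟩ | hq⟩ := isPath_cons.1 hp
    · simp at he
    obtain ⟨q', rfl⟩ := ih hq he
    exact absurd (isPath_cons.1 hq).2.1.symm (hsrc f hf)

def descentPath (g : ℕ → V) (t : V) : ℕ → List (V × V)
  | 0 => [(g 0, t)]
  | n + 1 => (g (n + 1), g n) :: descentPath g t n

variable {g : ℕ → V} {n : ℕ}

theorem mem_descentPath :
    e ∈ descentPath g t n ↔ e = (g 0, t) ∨ ∃ m < n, e = (g (m + 1), g m) := by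
  induction n with
  | zero => simp [descentPath]
  | succ n ih =>
    simp only [descentPath, List.mem_cons, ih]
    constructor
    · rintro (rfl | rfl | ⟨m, hm, rfl⟩)
      exacts [Or.inr ⟨n, n.lt_succ_self, rfl⟩, Or.inl rfl, Or.inr ⟨m, by omega, rfl⟩]
    · rintro (rfl | ⟨m, hm, rfl⟩)
      · exact Or.inr (Or.inl rfl)
      obtain rfl | hm := (Nat.lt_succ_iff_lt_or_eq.1 hm).symm
      · exact Or.inl rfl
      · exact Or.inr (Or.inr ⟨m, hm, rfl⟩)

theorem isPath_descentPath (hstep : ∀ m < n, (g (m + 1), g m) ∈ G) (hlast : (g 0, t) ∈ G) :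
    IsPath G (g n) t (descentPath g t n) := by
  induction n with
  | zero => exact isPath_cons.2 ⟨hlast, rfl, Or.inl ⟨rfl, rfl⟩⟩
  | succ n ih =>
    exact isPath_cons.2 ⟨hstep n n.lt_succ_self, rfl,
      Or.inr (ih fun m hm => hstep m (by omega))⟩

theorem IsPath.eq_descentPath (hp : IsPath G (g n) t p)
    (hstep : ∀ m < n, ∀ e ∈ G, e.1 = g (m + 1) → e.2 = g m)
    (hlast : ∀ e ∈ G, e.1 = g 0 → ∀ f ∈ G, f.1 ≠ e.2) (ht : ∀ m < n, g m ≠ t) :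
    p = descentPath g t n := by
  induction n generalizing p with
  | zero =>
    obtain _ | ⟨e, q⟩ := p
    · exact absurd rfl hp.1
    obtain ⟨he, hes, ⟨rfl, het⟩ | hq⟩ := isPath_cons.1 hp
    · rw [descentPath, ← hes, ← het]
    · obtain ⟨f, -, hf, hfe⟩ := hq.exists_mem_fst_eq
      exact absurd hfe (hlast e he hes f hf)
  | succ n ih =>
    obtain _ | ⟨e, q⟩ := p
    · exact absurd rfl hp.1
    obtain ⟨he, hes, hrest⟩ := isPath_cons.1 hp
    have hen := hstep n n.lt_succ_self e he hes
    obtain ⟨-, het⟩ | hq := hrest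
    · exact absurd (hen.symm.trans het) (ht n n.lt_succ_self)
    rw [hen] at hq
    rw [descentPath, ih hq (fun m hm => hstep m (by omega)) (fun m hm => ht m (by omega)),
      ← hes, ← hen]

theorem IsPath.sdiff [DecidableEq V] {F : Finset (V × V)} (hp : IsPath G s t p)
    (hF : ∀ e ∈ p, e ∉ F) : IsPath (G \ F) s t p :=
  ⟨hp.1, fun e he => mem_sdiff.2 ⟨hp.2.1 e he, hF e he⟩, hp.2.2⟩

end Paths

section Flows

variable {V : Type*} {G G' : Finset (V × V)} {s t : V} {r : ℕ}

theorem EDP.exists_outEdges [DecidableEq V] (h : EDP G s t r) :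
    ∃ S ⊆ G.filter (·.1 = s), S.card = r ∧
      ∀ e ∈ S, ∃ p, IsPath G s t p ∧ e ∈ p := by
  obtain ⟨ps, hps, hdisj⟩ := h
  choose f hfp hfG hfs using fun u => (hps u).exists_mem_fst_eq
  have hinj : Function.Injective f := fun u v huv =>
    by_contra fun hne => hdisj u v hne _ (hfp u) (huv ▸ hfp v)
  refine ⟨univ.image f, ?_, by rw [card_image_of_injective _ hinj, card_fin], ?_⟩
  · simp only [subset_iff, mem_image, mem_univ, true_and, mem_filter]
    rintro _ ⟨u, rfl⟩
    exact ⟨hfG u, hfs u⟩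
  · simp only [mem_image, mem_univ, true_and]
    rintro _ ⟨u, rfl⟩
    exact ⟨ps u, hps u, hfp u⟩

theorem EDP.le_outDeg_of_subset [DecidableEq V] (h : EDP G s t r) (hG : G ⊆ G') :
    r ≤ outDeg G' s := by
  obtain ⟨S, hS, rfl, -⟩ := h.exists_outEdges
  exact card_le_card (hS.trans (filter_subset_filter _ hG))

theorem EDP.exists_isPath_mem [DecidableEq V] (h : EDP G s t r) (hG : G ⊆ G')
    (hr : outDeg G' s ≤ r) {e : V × V} (he : e ∈ G') (hes : e.1 = s) :
    ∃ p, IsPath G s t p ∧ e ∈ p := by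
  obtain ⟨S, hS, rfl, hSp⟩ := h.exists_outEdges
  have hS' : S = G'.filter (·.1 = s) :=
    eq_of_subset_of_card_le (hS.trans (filter_subset_filter _ hG)) hr
  exact hSp e (hS' ▸ mem_filter.2 ⟨he, hes⟩)

theorem maxFlow_eq_of_edp (h : EDP G s t r) (hle : ∀ r', EDP G s t r' → r' ≤ r) :
    maxFlow G s t = r :=
  IsGreatest.csSup_eq ⟨h, hle⟩

theorem edp_maxFlow : EDP G s t (maxFlow G s t) :=
  Nat.sSup_mem ⟨0, show EDP G s t 0 from ⟨Fin.elim0, fun u => u.elim0, fun u => u.elim0⟩⟩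
    ⟨outDeg G s, fun _ h => EDP.le_outDeg_of_subset h subset_rfl⟩

end Flows

section LowerBoundGraph

variable {lam k nY : ℕ}

@[simp]
theorem mem_lbGraph {e : LBV lam k nY × LBV lam k nY} :
    e ∈ lbGraph lam k nY ↔ lbEdge lam k nY e := by
  simp [lbGraph]

def treeRoot (k : ℕ) : TreeNode k :=
  ⟨0, Nat.sub_pos_of_lt (Nat.one_lt_two_pow k.succ_ne_zero)⟩

def ancestorNode (x : TreeNode k) (j : ℕ) : TreeNode k :=
  ⟨heapParent^[j] x, (iterate_heapParent_le x j).trans_lt x.isLt⟩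

/-- The edges of `F`: from a node of the root-to-`x` path of tree `i` to its child off the
path. -/
def IsOffPathEdge (i : Fin lam) (x : TreeNode k) (e : LBV lam k nY × LBV lam k nY) : Prop :=
  ∃ a b : TreeNode k, e = (Sum.inr (Sum.inl (i, a)), Sum.inr (Sum.inl (i, b))) ∧
    ((b : ℕ) = 2 * (a : ℕ) + 1 ∨ (b : ℕ) = 2 * (a : ℕ) + 2) ∧
    IsHeapAncestor a x ∧ ¬ IsHeapAncestor b x

/-- The path `s → r_j → ⋯ → x_j → y`, with `x_j` the copy of the leaf `x` in tree `j`. -/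
def treePath (x : TreeNode k) (y : Fin nY) (j : Fin lam) : List (LBV lam k nY × LBV lam k nY) :=
  (Sum.inl (), Sum.inr (Sum.inl (j, treeRoot k))) ::
    descentPath (fun m => Sum.inr (Sum.inl (j, ancestorNode x m))) (Sum.inr (Sum.inr y)) k

theorem outDeg_lbGraph_source_le : outDeg (lbGraph lam k nY) (Sum.inl ()) ≤ lam := by
  calc outDeg (lbGraph lam k nY) (Sum.inl ())
      ≤ (univ.image fun j : Fin lam =>
          ((Sum.inl (), Sum.inr (Sum.inl (j, treeRoot k))) :
            LBV lam k nY × LBV lam k nY)).card := by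
        refine card_le_card fun e he => ?_
        obtain ⟨⟨⟩ | ⟨j, a⟩ | y, _ | ⟨j', b⟩ | y'⟩ := e <;> simp [lbEdge] at he
        exact mem_image.2 ⟨j', mem_univ _, by rw [show treeRoot k = b from Fin.ext he.symm]⟩
    _ ≤ lam := card_image_le.trans (card_fin lam).le

theorem source_edge_mem_lbGraph (j : Fin lam) :
    ((Sum.inl (), Sum.inr (Sum.inl (j, treeRoot k))) : LBV lam k nY × LBV lam k nY) ∈
      lbGraph lam k nY :=
  mem_lbGraph.2 rfl

variable {x : TreeNode k} {y : Fin nY}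

theorem ancestorNode_eq_treeRoot (hx : 2 ^ k - 1 ≤ (x : ℕ)) : ancestorNode x k = treeRoot k :=
  Fin.ext (iterate_heapParent_eq_zero (heapDepth_eq_of_le_of_lt hx x.isLt) le_rfl)

theorem isPath_treePath (hx : 2 ^ k - 1 ≤ (x : ℕ)) (j : Fin lam) :
    IsPath (lbGraph lam k nY) (Sum.inl ()) (Sum.inr (Sum.inr y)) (treePath x y j) := by
  have hd := heapDepth_eq_of_le_of_lt hx x.isLt
  refine isPath_cons.2 ⟨source_edge_mem_lbGraph j, rfl, Or.inr ?_⟩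
  rw [← ancestorNode_eq_treeRoot hx]
  exact isPath_descentPath (fun m hm => mem_lbGraph.2 ⟨rfl, iterate_heapParent_isChild hd hm⟩)
    (mem_lbGraph.2 hx)

theorem mem_treePath {j : Fin lam} {e : LBV lam k nY × LBV lam k nY} :
    e ∈ treePath x y j ↔ e = (Sum.inl (), Sum.inr (Sum.inl (j, treeRoot k))) ∨
      e = (Sum.inr (Sum.inl (j, x)), Sum.inr (Sum.inr y)) ∨
      ∃ m < k, e = (Sum.inr (Sum.inl (j, ancestorNode x (m + 1))),
        Sum.inr (Sum.inl (j, ancestorNode x m))) := by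
  rw [treePath, List.mem_cons, mem_descentPath]
  rfl

theorem not_isOffPathEdge_of_mem_treePath {i j : Fin lam} {e : LBV lam k nY × LBV lam k nY}
    (he : e ∈ treePath x y j) : ¬ IsOffPathEdge i x e := by
  rintro ⟨a, b, rfl, -, -, hb⟩
  obtain h | h | ⟨m, -, h⟩ := mem_treePath.1 he
  · simp at h
  · simp at h
  · simp only [Prod.mk.injEq, Sum.inr.injEq, Sum.inl.injEq] at h
    exact hb ⟨m, by rw [h.2.2]; rfl⟩

theorem treePath_disjoint {j j' : Fin lam} (hjj' : j ≠ j') {e : LBV lam k nY × LBV lam k nY}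
    (he : e ∈ treePath x y j) : e ∉ treePath x y j' := by
  intro he'
  obtain h | h | ⟨m, -, h⟩ := mem_treePath.1 he <;>
    obtain h' | h' | ⟨m', -, h'⟩ := mem_treePath.1 he' <;>
    simp_all

theorem snd_ne_source_of_mem_lbGraph {e : LBV lam k nY × LBV lam k nY}
    (he : e ∈ lbGraph lam k nY) : e.2 ≠ Sum.inl () := by
  obtain ⟨⟨⟩ | ⟨j, a⟩ | y, _ | ⟨j', b⟩ | y'⟩ := e <;> simp_all [lbEdge]

theorem fst_ne_snd_of_fst_eq_leaf (hx : 2 ^ k - 1 ≤ (x : ℕ)) {j : Fin lam}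
    {e f : LBV lam k nY × LBV lam k nY} (he : e ∈ lbGraph lam k nY)
    (hex : e.1 = Sum.inr (Sum.inl (j, x))) (hf : f ∈ lbGraph lam k nY) : f.1 ≠ e.2 := by
  obtain ⟨u, ⟨⟩ | ⟨j', b⟩ | y'⟩ := e
  · simp [lbEdge] at he
  · subst hex
    have hb : (b : ℕ) = 2 * x + 1 ∨ (b : ℕ) = 2 * x + 2 := (mem_lbGraph.1 he).2
    have hblt : (b : ℕ) < 2 ^ k * 2 - 1 := pow_succ 2 k ▸ b.isLt
    omega
  · obtain ⟨_ | ⟨j, a⟩ | y, v⟩ := f <;> simp_all [lbEdge]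

variable {i : Fin lam} {F : Finset (LBV lam k nY × LBV lam k nY)}

theorem snd_eq_of_mem_lbGraph_sdiff (hx : 2 ^ k - 1 ≤ (x : ℕ))
    (hF : ∀ e, e ∈ F ↔ IsOffPathEdge i x e) {m : ℕ} (hm : m < k)
    {e : LBV lam k nY × LBV lam k nY} (he : e ∈ lbGraph lam k nY \ F)
    (he1 : e.1 = Sum.inr (Sum.inl (i, ancestorNode x (m + 1)))) :
    e.2 = Sum.inr (Sum.inl (i, ancestorNode x m)) := by
  have hd := heapDepth_eq_of_le_of_lt hx x.isLt
  obtain ⟨u, v⟩ := e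
  subst he1
  rw [mem_sdiff, mem_lbGraph, hF] at he
  obtain ⟨⟩ | ⟨j, b⟩ | y' := v
  · exact absurd he.1 (by simp [lbEdge])
  · obtain ⟨⟨rfl, hb⟩, hbF⟩ := he
    have hanc : IsHeapAncestor b x := by
      by_contra hb'
      exact hbF ⟨_, b, rfl, hb, ⟨m + 1, rfl⟩, hb'⟩
    have hb0 : (b : ℕ) ≠ 0 := by omega
    have := hanc.eq_iterate_of_heapParent_eq hd hb0 ((heapParent_eq_iff hb0).2 hb) hm
    rw [show b = ancestorNode x m from Fin.ext this]
  · exact absurd he.1 (not_le.2 (iterate_heapParent_lt hd hm))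

theorem eq_treePath (hx : 2 ^ k - 1 ≤ (x : ℕ)) (hF : ∀ e, e ∈ F ↔ IsOffPathEdge i x e)
    {p : List (LBV lam k nY × LBV lam k nY)}
    (hp : IsPath (lbGraph lam k nY \ F) (Sum.inl ()) (Sum.inr (Sum.inr y)) p)
    (hmem : (Sum.inl (), Sum.inr (Sum.inl (i, treeRoot k))) ∈ p) :
    p = treePath x y i := by
  obtain ⟨q, rfl⟩ := hp.eq_cons_of_mem hmem fun f hf =>
    snd_ne_source_of_mem_lbGraph (mem_sdiff.1 hf).1
  obtain ⟨-, -, ⟨-, h⟩ | hq⟩ := isPath_cons.1 hp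
  · simp at h
  rw [treePath, ← ancestorNode_eq_treeRoot hx] at *
  exact congrArg _ <| hq.eq_descentPath (fun m hm _ he => snd_eq_of_mem_lbGraph_sdiff hx hF hm he)
    (fun _ he hex _ hf => fst_ne_snd_of_fst_eq_leaf hx (mem_sdiff.1 he).1 hex
      (mem_sdiff.1 hf).1) (fun _ _ => by simp)

theorem isPath_treePath_sdiff (hx : 2 ^ k - 1 ≤ (x : ℕ))
    (hF : ∀ e, e ∈ F ↔ IsOffPathEdge i x e) (j : Fin lam) :
    IsPath (lbGraph lam k nY \ F) (Sum.inl ()) (Sum.inr (Sum.inr y)) (treePath x y j) :=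
  (isPath_treePath hx j).sdiff fun _ he heF =>
    not_isOffPathEdge_of_mem_treePath he ((hF _).1 heF)

theorem maxFlow_lbGraph_sdiff (hx : 2 ^ k - 1 ≤ (x : ℕ))
    (hF : ∀ e, e ∈ F ↔ IsOffPathEdge i x e) :
    maxFlow (lbGraph lam k nY \ F) (Sum.inl ()) (Sum.inr (Sum.inr y)) = lam :=
  maxFlow_eq_of_edp ⟨treePath x y, isPath_treePath_sdiff hx hF,
      fun _ _ hjj' _ he => treePath_disjoint hjj' he⟩
    fun _ h => (h.le_outDeg_of_subset sdiff_subset).trans outDeg_lbGraph_source_le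

theorem IsOffPathEdge.exists_eq (hx : 2 ^ k - 1 ≤ (x : ℕ)) {e : LBV lam k nY × LBV lam k nY}
    (he : IsOffPathEdge i x e) :
    ∃ m < k, ∃ b : TreeNode k,
      e = (Sum.inr (Sum.inl (i, ancestorNode x (m + 1))), Sum.inr (Sum.inl (i, b))) ∧
      ((b : ℕ) = 2 * heapParent^[m + 1] x + 1 ∨ (b : ℕ) = 2 * heapParent^[m + 1] x + 2) ∧
      (b : ℕ) ≠ heapParent^[m] x := by
  obtain ⟨a, b, rfl, hb, ha, hnb⟩ := he
  obtain ⟨_ | m, hmk, hma⟩ := ha.exists_le (heapDepth_eq_of_le_of_lt hx x.isLt)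
  · have hblt : (b : ℕ) < 2 ^ k * 2 - 1 := pow_succ 2 k ▸ b.isLt
    rw [Function.iterate_zero_apply] at hma
    omega
  · obtain rfl : a = ancestorNode x (m + 1) := Fin.ext hma.symm
    exact ⟨m, hmk, b, rfl, hb, fun h => hnb ⟨m, h.symm⟩⟩

theorem card_le_of_isOffPathEdge (hx : 2 ^ k - 1 ≤ (x : ℕ))
    (hF : ∀ e, e ∈ F ↔ IsOffPathEdge i x e) : F.card ≤ k := by
  have hd := heapDepth_eq_of_le_of_lt hx x.isLt
  have hinj : Set.InjOn Prod.fst (F : Set (LBV lam k nY × LBV lam k nY)) := by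
    intro e he e' he' hee'
    obtain ⟨m, hm, b, rfl, hb, hbm⟩ := ((hF e).1 he).exists_eq hx
    obtain ⟨m', hm', b', rfl, hb', hbm'⟩ := ((hF e').1 he').exists_eq hx
    simp only [Prod.mk.injEq, Sum.inr.injEq, Sum.inl.injEq, true_and] at hee'
    have hmm' := congrArg heapDepth (Fin.val_eq_of_eq hee')
    simp only [ancestorNode, heapDepth_iterate_of_heapDepth_eq hd] at hmm'
    obtain rfl : m = m' := by omega
    have := iterate_heapParent_isChild hd hm
    rw [show b = b' from Fin.ext (by omega)]
  calc F.card = (F.image Prod.fst).card := (card_image_of_injOn hinj).symm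
    _ ≤ ((range k).image fun m =>
          (Sum.inr (Sum.inl (i, ancestorNode x (m + 1))) : LBV lam k nY)).card := by
        refine card_le_card fun v hv => ?_
        obtain ⟨e, he, rfl⟩ := mem_image.1 hv
        obtain ⟨m, hm, b, rfl, -⟩ := ((hF e).1 he).exists_eq hx
        exact mem_image.2 ⟨m, mem_range.2 hm, rfl⟩
    _ ≤ k := card_image_le.trans (card_range k).le

end LowerBoundGraph

/-- in the lower-bound graph, for a leaf `x` of tree `i` and `y ∈ Y`,
failing the set `F` of sibling edges along the root-to-`x` path leaves exactly one
`s`-to-`y` path through the root `r_i`, this path uses the edge `(x, y)`, the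
`s`-`y` max-flow of `G ∖ F` is `lam`, and hence any subgraph of `G` missing `(x,y)`
is not a `(lam,k)`-FT-BFP of `G`. -/
theorem stmt_7 (lam k nY : ℕ) (i : Fin lam) (x : TreeNode k)
    (hx : 2 ^ k - 1 ≤ (x : ℕ)) (y : Fin nY)
    (root : TreeNode k) (hroot : (root : ℕ) = 0)
    (F : Finset (LBV lam k nY × LBV lam k nY))
    (hF : ∀ e : LBV lam k nY × LBV lam k nY, e ∈ F ↔
      ∃ a b : TreeNode k,
        e = (Sum.inr (Sum.inl (i, a)), Sum.inr (Sum.inl (i, b))) ∧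
        ((b : ℕ) = 2 * (a : ℕ) + 1 ∨ (b : ℕ) = 2 * (a : ℕ) + 2) ∧
        (∃ j : ℕ, (fun m : ℕ => (m - 1) / 2)^[j] (x : ℕ) = (a : ℕ)) ∧
        ¬ (∃ j : ℕ, (fun m : ℕ => (m - 1) / 2)^[j] (x : ℕ) = (b : ℕ))) :
    (∃! p : List (LBV lam k nY × LBV lam k nY),
        IsPath (lbGraph lam k nY \ F) (Sum.inl ()) (Sum.inr (Sum.inr y)) p ∧
        (Sum.inl (), Sum.inr (Sum.inl (i, root))) ∈ p) ∧
    (∀ p : List (LBV lam k nY × LBV lam k nY),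
        IsPath (lbGraph lam k nY \ F) (Sum.inl ()) (Sum.inr (Sum.inr y)) p →
        (Sum.inl (), Sum.inr (Sum.inl (i, root))) ∈ p →
        (Sum.inr (Sum.inl (i, x)), Sum.inr (Sum.inr y)) ∈ p) ∧
    maxFlow (lbGraph lam k nY \ F) (Sum.inl ()) (Sum.inr (Sum.inr y)) = lam ∧
    (∀ H : Finset (LBV lam k nY × LBV lam k nY), H ⊆ lbGraph lam k nY →
        (Sum.inr (Sum.inl (i, x)), Sum.inr (Sum.inr y)) ∉ H →
        ¬ IsFTBFP (lbGraph lam k nY) H (Sum.inl ()) lam k) := by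
  replace hF : ∀ e, e ∈ F ↔ IsOffPathEdge i x e := hF
  obtain rfl : root = treeRoot k := Fin.ext hroot
  have hxy : (Sum.inr (Sum.inl (i, x)), Sum.inr (Sum.inr y)) ∈ treePath x y i :=
    mem_treePath.2 (Or.inr (Or.inl rfl))
  have hflow := maxFlow_lbGraph_sdiff (y := y) hx hF
  refine ⟨⟨treePath x y i, ⟨isPath_treePath_sdiff hx hF i, List.mem_cons_self⟩,
    fun _ hp => eq_treePath hx hF hp.1 hp.2⟩, fun _ hp hmem => eq_treePath hx hF hp hmem ▸ hxy,
    hflow, ?_⟩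
  rintro H hHG hxyH ⟨-, hH⟩
  have hHflow := (hH F (card_le_of_isOffPathEdge hx hF) _).1 hflow.le
  rw [hflow] at hHflow
  obtain ⟨p, hp, hmem⟩ := (hHflow ▸ edp_maxFlow).exists_isPath_mem
    (sdiff_subset.trans hHG) outDeg_lbGraph_source_le (source_edge_mem_lbGraph i) rfl
  have hxyp := eq_treePath hx hF (hp.mono (sdiff_subset_sdiff hHG le_rfl)) hmem ▸ hxy
  exact hxyH (mem_sdiff.1 (hp.2.1 _ hxyp)).1
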